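/- arXiv:2105.04860 — 5 statements merged into one kernel-verified Lean document; each statement's English description precedes it below -/
import Mathlib

section
/- Let ρ' ∈ [1, ∞] and let φ : R^d → R be measurable with ‖φ‖_{L^{ρ'}} < ∞. For every c > 0 there exists a finite constant C depending only on ρ', d, c such that for all 0 ≤ s < u < t and x, y ∈ R^d: ∫_{R^d} g_c(u - s, z - x) |φ(z)| g_c(t - u, y - z) dz ≤ C ‖φ‖_{L^{ρ'}} (t - s)^{d/(2ρ')} (u - s)^{-d/(2ρ')} (t - u)^{-d/(2ρ')} g_c(t - s, y - x). -/
/-! Completing the square in `z` factors the product of the two kernels as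
`g_c(t - s, y - x) · g_c(τ, z - m)`, with `τ = (u - s)(t - u)/(t - s)` and `m` on the segment
from `x` to `y`. Hölder's inequality with the conjugate exponent `q` of `ρ'` bounds
`∫ g_c(τ, z - m) |φ z| dz` by `‖g_c(τ, ·)‖_{L^q} ‖φ‖_{L^{ρ'}}`, and interpolating between
`‖g_c(τ, ·)‖_{L^1} = 1` and `‖g_c(τ, ·)‖_{L^∞} = (2πcτ)^{-d/2}` gives
`‖g_c(τ, ·)‖_{L^q} ≤ (2πcτ)^{-d/(2ρ')}`; finally `τ^{-1} = (t - s)/((u - s)(t - u))`. -/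

open MeasureTheory
open scoped Real ENNReal

/-- `gauss d c u x` is the density at `x` of the centered Gaussian vector in `ℝ^d`
with covariance matrix `c u I_d`. -/
noncomputable def gauss (d : ℕ) (c u : ℝ) (x : EuclideanSpace ℝ (Fin d)) : ℝ :=
  (2 * Real.pi * c * u) ^ (-(d : ℝ) / 2) * Real.exp (-‖x‖ ^ 2 / (2 * c * u))

lemma ENNReal.HolderConjugate.toReal_inv_eq_one_sub {p q : ℝ≥0∞} [p.HolderConjugate q] :
    q.toReal⁻¹ = 1 - p.toReal⁻¹ := by
  rw [← ENNReal.toReal_inv, ← ENNReal.toReal_inv, ← ENNReal.HolderConjugate.one_sub_inv p q,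
    ENNReal.toReal_sub_of_le (ENNReal.HolderTriple.inv_le_inv p q 1 |>.trans_eq inv_one)
      ENNReal.one_ne_top, ENNReal.toReal_one]

theorem MeasureTheory.eLpNorm_le_eLpNorm_top_rpow_mul_eLpNorm_one_rpow
    {α E : Type*} [MeasurableSpace α] {μ : Measure α} [NormedAddCommGroup E]
    {f : α → E} (hf : AEStronglyMeasurable f μ) (q p : ℝ≥0∞) [q.HolderConjugate p] :
    eLpNorm f q μ ≤ eLpNorm f ∞ μ ^ p.toReal⁻¹ * eLpNorm f 1 μ ^ q.toReal⁻¹ := by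
  -- `q = ∞` is covered too, since `(∞ : ℝ≥0∞).toReal⁻¹ = 0`
  rw [ENNReal.HolderConjugate.toReal_inv_eq_one_sub (p := q)]
  rcases eq_or_ne q ∞ with rfl | hq_top
  · simp
  have hq_one : 1 ≤ q.toReal := by
    simpa using ENNReal.toReal_mono hq_top (ENNReal.HolderConjugate.one_le q p)
  have hpow : ∫⁻ x, ‖f x‖ₑ ^ q.toReal ∂μ ≤ eLpNorm f ∞ μ ^ (q.toReal - 1) * eLpNorm f 1 μ := by
    rw [eLpNorm_one_eq_lintegral_enorm, ← lintegral_const_mul'' _ hf.enorm]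
    refine lintegral_mono_ae ?_
    filter_upwards [enorm_ae_le_eLpNormEssSup f μ] with x hx
    calc ‖f x‖ₑ ^ q.toReal = ‖f x‖ₑ ^ (q.toReal - 1) * ‖f x‖ₑ ^ (1 : ℝ) := by
          rw [← ENNReal.rpow_add_of_nonneg _ _ (by linarith) zero_le_one, sub_add_cancel]
      _ ≤ eLpNorm f ∞ μ ^ (q.toReal - 1) * ‖f x‖ₑ := by
          rw [ENNReal.rpow_one, eLpNorm_exponent_top]
          gcongr
  rw [eLpNorm_eq_lintegral_rpow_enorm_toReal (ENNReal.HolderConjugate.ne_zero q p) hq_top, one_div]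
  calc (∫⁻ x, ‖f x‖ₑ ^ q.toReal ∂μ) ^ q.toReal⁻¹
      ≤ (eLpNorm f ∞ μ ^ (q.toReal - 1) * eLpNorm f 1 μ) ^ q.toReal⁻¹ :=
        ENNReal.rpow_le_rpow hpow (by positivity)
    _ = eLpNorm f ∞ μ ^ (1 - q.toReal⁻¹) * eLpNorm f 1 μ ^ q.toReal⁻¹ := by
      rw [ENNReal.mul_rpow_of_nonneg _ _ (by positivity), ← ENNReal.rpow_mul]
      congr 2
      field_simp

lemma Real.rpow_neg_mul_div_add {a b : ℝ} (ha : 0 < a) (hb : 0 < b) (e : ℝ) :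
    (a * b / (a + b)) ^ (-e) = (a + b) ^ e * a ^ (-e) * b ^ (-e) := by
  rw [Real.div_rpow (by positivity) (by positivity), Real.mul_rpow ha.le hb.le,
    Real.rpow_neg (by positivity : 0 ≤ a + b), div_inv_eq_mul]
  ring

section Gauss

variable {d : ℕ} {c τ : ℝ}

lemma gauss_pos (hc : 0 < c) (hτ : 0 < τ) (x : EuclideanSpace ℝ (Fin d)) :
    0 < gauss d c τ x := by
  unfold gauss; positivity

lemma gauss_le (hc : 0 < c) (hτ : 0 < τ) (x : EuclideanSpace ℝ (Fin d)) :
    gauss d c τ x ≤ (2 * π * c * τ) ^ (-(d : ℝ) / 2) := by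
  refine mul_le_of_le_one_right (by positivity) (Real.exp_le_one_iff.2 ?_)
  rw [neg_div]
  exact neg_nonpos.2 (by positivity)

lemma integral_gauss (hc : 0 < c) (hτ : 0 < τ) :
    ∫ x, gauss d c τ x = 1 := by
  have hexp (x : EuclideanSpace ℝ (Fin d)) :
      -‖x‖ ^ 2 / (2 * c * τ) = -(2 * c * τ)⁻¹ * ‖x‖ ^ 2 := by ring
  simp_rw [gauss, hexp]
  rw [integral_const_mul, GaussianFourier.integral_rexp_neg_mul_sq_norm (by positivity),
    finrank_euclideanSpace_fin, div_inv_eq_mul, neg_div, Real.rpow_neg (by positivity),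
    show π * (2 * c * τ) = 2 * π * c * τ by ring, inv_mul_cancel₀ (by positivity)]

lemma integrable_gauss (hc : 0 < c) (hτ : 0 < τ) : Integrable (gauss d c τ) :=
  .of_integral_ne_zero (by rw [integral_gauss hc hτ]; exact one_ne_zero)

lemma eLpNorm_gauss_sub_le (hc : 0 < c) (hτ : 0 < τ) (q p : ℝ≥0∞) [q.HolderConjugate p]
    (m : EuclideanSpace ℝ (Fin d)) :
    eLpNorm (fun z ↦ gauss d c τ (z - m)) q volume
      ≤ ENNReal.ofReal ((2 * π * c * τ) ^ (-(d : ℝ) / 2 * p.toReal⁻¹)) := by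
  have hmeas : AEStronglyMeasurable (fun z ↦ gauss d c τ (z - m)) volume := by
    unfold gauss; fun_prop
  have htop : eLpNorm (fun z ↦ gauss d c τ (z - m)) ∞ volume
      ≤ ENNReal.ofReal ((2 * π * c * τ) ^ (-(d : ℝ) / 2)) := by
    rw [eLpNorm_exponent_top]
    refine eLpNormEssSup_le_of_ae_bound (ae_of_all _ fun z ↦ ?_)
    rw [Real.norm_of_nonneg (gauss_pos hc hτ _).le]
    exact gauss_le hc hτ _
  have hone : eLpNorm (fun z ↦ gauss d c τ (z - m)) 1 volume = 1 := by
    rw [eLpNorm_one_eq_lintegral_enorm, ← ofReal_integral_norm_eq_lintegral_enorm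
      ((integrable_gauss hc hτ).comp_sub_right m)]
    simp_rw [Real.norm_of_nonneg (gauss_pos hc hτ _).le]
    rw [integral_sub_right_eq_self (gauss d c τ) m, integral_gauss hc hτ, ENNReal.ofReal_one]
  calc eLpNorm (fun z ↦ gauss d c τ (z - m)) q volume
      ≤ _ := eLpNorm_le_eLpNorm_top_rpow_mul_eLpNorm_one_rpow hmeas q p
    _ ≤ ENNReal.ofReal ((2 * π * c * τ) ^ (-(d : ℝ) / 2)) ^ p.toReal⁻¹ := by
      rw [hone, ENNReal.one_rpow, mul_one]
      exact ENNReal.rpow_le_rpow htop (by positivity)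
    _ = _ := by
      rw [ENNReal.ofReal_rpow_of_nonneg (by positivity) (by positivity),
        ← Real.rpow_mul (by positivity)]

lemma norm_sq_div_add_norm_sub_sq_div {V : Type*} [NormedAddCommGroup V] [InnerProductSpace ℝ V]
    {a b : ℝ} (ha : 0 < a) (hb : 0 < b) (v w : V) :
    ‖w‖ ^ 2 / a + ‖v - w‖ ^ 2 / b
      = ‖v‖ ^ 2 / (a + b) + ‖w - (a / (a + b)) • v‖ ^ 2 / (a * b / (a + b)) := by
  rw [norm_sub_sq_real, norm_sub_sq_real, real_inner_smul_right, norm_smul, real_inner_comm,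
    Real.norm_of_nonneg (by positivity : 0 ≤ a / (a + b))]
  field_simp
  ring

lemma gauss_mul_gauss (hc : 0 < c) {a b : ℝ} (ha : 0 < a) (hb : 0 < b)
    (x y z : EuclideanSpace ℝ (Fin d)) :
    gauss d c a (z - x) * gauss d c b (y - z)
      = gauss d c (a + b) (y - x)
          * gauss d c (a * b / (a + b)) (z - (x + (a / (a + b)) • (y - x))) := by
  have hcoef : (2 * π * c * a) * (2 * π * c * b)
      = (2 * π * c * (a + b)) * (2 * π * c * (a * b / (a + b))) := by
    field_simp
  have hexp : -‖z - x‖ ^ 2 / (2 * c * a) + -‖y - z‖ ^ 2 / (2 * c * b)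
      = -‖y - x‖ ^ 2 / (2 * c * (a + b))
        + -‖z - (x + (a / (a + b)) • (y - x))‖ ^ 2 / (2 * c * (a * b / (a + b))) := by
    have key := norm_sq_div_add_norm_sub_sq_div ha hb (y - x) (z - x)
    rw [sub_sub_sub_cancel_right, sub_sub] at key
    calc -‖z - x‖ ^ 2 / (2 * c * a) + -‖y - z‖ ^ 2 / (2 * c * b)
        = -(‖z - x‖ ^ 2 / a + ‖y - z‖ ^ 2 / b) / (2 * c) := by ring
      _ = _ := by rw [key]; field_simp; ring
  unfold gauss
  rw [mul_mul_mul_comm, ← Real.exp_add, hexp, Real.exp_add,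
    ← Real.mul_rpow (by positivity) (by positivity), hcoef,
    Real.mul_rpow (by positivity) (by positivity)]
  ring

lemma integral_gauss_sub_mul_abs_le (hc : 0 < c) (hτ : 0 < τ) {ρ : ℝ≥0∞} (hρ : 1 ≤ ρ)
    {φ : EuclideanSpace ℝ (Fin d) → ℝ} (hφ : AEStronglyMeasurable φ volume)
    (hφρ : eLpNorm φ ρ volume ≠ ∞) (m : EuclideanSpace ℝ (Fin d)) :
    ∫ z, gauss d c τ (z - m) * |φ z|
      ≤ (2 * π * c * τ) ^ (-(d : ℝ) / 2 * ρ.toReal⁻¹) * (eLpNorm φ ρ volume).toReal := by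
  have : ρ.conjExponent.HolderConjugate ρ := (ENNReal.HolderConjugate.conjExponent hρ).symm
  have hmeas : AEStronglyMeasurable (fun z ↦ gauss d c τ (z - m)) volume := by
    unfold gauss; fun_prop
  have hholder := eLpNorm_le_eLpNorm_mul_eLpNorm'_of_norm (μ := volume) (p := ρ.conjExponent)
    (q := ρ) (r := 1) hmeas hφ (· * ·) 1 (ae_of_all _ fun z ↦ by simp [norm_mul])
  calc ∫ z, gauss d c τ (z - m) * |φ z|
      = (eLpNorm (fun z ↦ gauss d c τ (z - m) * φ z) 1 volume).toReal := by
        rw [eLpNorm_one_eq_lintegral_enorm,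
          ← integral_norm_eq_lintegral_enorm (f := fun z ↦ gauss d c τ (z - m) * φ z)
            (hmeas.mul hφ)]
        simp_rw [norm_mul, Real.norm_of_nonneg (gauss_pos hc hτ _).le, Real.norm_eq_abs]
    _ ≤ (ENNReal.ofReal ((2 * π * c * τ) ^ (-(d : ℝ) / 2 * ρ.toReal⁻¹))
          * eLpNorm φ ρ volume).toReal := by
        refine ENNReal.toReal_mono (by finiteness) (hholder.trans ?_)
        rw [ENNReal.coe_one, one_mul]
        gcongr
        exact eLpNorm_gauss_sub_le hc hτ _ ρ m
    _ = _ := by rw [ENNReal.toReal_mul, ENNReal.toReal_ofReal (by positivity)]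

lemma integral_gauss_mul_abs_mul_gauss_le (hc : 0 < c) {a b : ℝ} (ha : 0 < a) (hb : 0 < b)
    {ρ : ℝ≥0∞} (hρ : 1 ≤ ρ) {φ : EuclideanSpace ℝ (Fin d) → ℝ}
    (hφ : AEStronglyMeasurable φ volume) (hφρ : eLpNorm φ ρ volume ≠ ∞)
    (x y : EuclideanSpace ℝ (Fin d)) :
    ∫ z, gauss d c a (z - x) * |φ z| * gauss d c b (y - z)
      ≤ (2 * π * c) ^ (-((d : ℝ) / (2 * ρ.toReal))) * (eLpNorm φ ρ volume).toReal
          * (a + b) ^ ((d : ℝ) / (2 * ρ.toReal)) * a ^ (-(d : ℝ) / (2 * ρ.toReal))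
          * b ^ (-(d : ℝ) / (2 * ρ.toReal)) * gauss d c (a + b) (y - x) := by
  have hτ : 0 < a * b / (a + b) := by positivity
  have hexp : -(d : ℝ) / 2 * ρ.toReal⁻¹ = -((d : ℝ) / (2 * ρ.toReal)) := by ring
  calc _ = gauss d c (a + b) (y - x) * ∫ z, gauss d c (a * b / (a + b))
          (z - (x + (a / (a + b)) • (y - x))) * |φ z| := by
        rw [← integral_const_mul]
        congr with z
        rw [mul_right_comm, gauss_mul_gauss hc ha hb, mul_assoc]
    _ ≤ gauss d c (a + b) (y - x)
          * ((2 * π * c * (a * b / (a + b))) ^ (-(d : ℝ) / 2 * ρ.toReal⁻¹)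
            * (eLpNorm φ ρ volume).toReal) := by
        gcongr
        · exact (gauss_pos hc (by positivity) _).le
        · exact integral_gauss_sub_mul_abs_le hc hτ hρ hφ hφρ _
    _ = _ := by
        rw [hexp, Real.mul_rpow (by positivity) hτ.le, Real.rpow_neg_mul_div_add ha hb, neg_div]
        ring

end Gauss

theorem gauss_Lp_convolution_bound (d : ℕ) (c : ℝ) (hc : 0 < c) (ρ' : ℝ≥0∞) (hρ : 1 ≤ ρ') :
    ∃ C : ℝ, 0 ≤ C ∧
      ∀ (φ : EuclideanSpace ℝ (Fin d) → ℝ), Measurable φ → eLpNorm φ ρ' volume < ∞ →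
        ∀ s u t : ℝ, 0 ≤ s → s < u → u < t →
          ∀ x y : EuclideanSpace ℝ (Fin d),
            (∫ z : EuclideanSpace ℝ (Fin d),
                gauss d c (u - s) (z - x) * |φ z| * gauss d c (t - u) (y - z)) ≤
              C * (eLpNorm φ ρ' volume).toReal *
                (t - s) ^ ((d : ℝ) / (2 * ρ'.toReal)) *
                (u - s) ^ (-(d : ℝ) / (2 * ρ'.toReal)) *
                (t - u) ^ (-(d : ℝ) / (2 * ρ'.toReal)) *
                gauss d c (t - s) (y - x) := by
  refine ⟨(2 * π * c) ^ (-((d : ℝ) / (2 * ρ'.toReal))), by positivity, ?_⟩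
  intro φ hφ hφρ s u t _ hsu hut x y
  have hts : t - s = (u - s) + (t - u) := by ring
  rw [hts]
  exact integral_gauss_mul_abs_mul_gauss_le hc (sub_pos.2 hsu) (sub_pos.2 hut) hρ
    hφ.aestronglyMeasurable hφρ.ne x y
end

section
/- Gronwall–Volterra lemma with one singularity: let β̃ < 1, β > β̃ − 1 and η, δ, T > 0. There exists a finite constant C depending only on β, β̃, η, δ, T such that any measurable bounded function f : [0,T] → R_+ satisfying f(t) ≤ η + δ t^β ∫_0^t f(s) s^{-β̃} ds for all t ∈ [0,T] obeys sup_{t∈[0,T]} f(t) ≤ C. -/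
/-!
Near `0` the weight `δ t^β ∫₀ᵗ s^(-β̃) ds = δ t^(β + 1 - β̃) / (1 - β̃)` is at most `1/2`, and on
`[h₁, T]` the kernel `t^β s^(-β̃)` is bounded, so over windows `[a, a + h]` of small length `h` its
mass is again at most `1/2`. If `f ≤ A` on `[0, a)` and `K` bounds the mass over `[0, a]`, the
inequality gives `sup f ≤ η + K A + (sup f) / 2` on `[0, a + h]`, and since `f` is bounded this yields
`sup f ≤ 2 (A + η + K A)`. Finitely many windows cover `[0, T]`.
-/

open MeasureTheory intervalIntegral Set

lemma le_two_mul_of_forall_le_add_half {α : Type*} {s : Set α} {f : α → ℝ} {A : ℝ}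
    (hbdd : BddAbove (f '' s)) (h : ∀ S, (∀ t ∈ s, f t ≤ S) → ∀ t ∈ s, f t ≤ A + S / 2) :
    ∀ t ∈ s, f t ≤ 2 * A := by
  intro t ht
  have hsup : ∀ x ∈ s, f x ≤ sSup (f '' s) := fun x hx => le_csSup hbdd (mem_image_of_mem f hx)
  have : sSup (f '' s) ≤ A + sSup (f '' s) / 2 :=
    csSup_le ⟨f t, mem_image_of_mem f ht⟩ (forall_mem_image.2 (h _ hsup))
  linarith [hsup t ht]

lemma rpow_le_max_of_mem_Icc {a b x : ℝ} (r : ℝ) (ha : 0 < a) (hx : x ∈ Icc a b) :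
    x ^ r ≤ max (a ^ r) (b ^ r) := by
  rcases le_or_gt 0 r with hr | hr
  · exact le_max_of_le_right (Real.rpow_le_rpow (ha.le.trans hx.1) hx.2 hr)
  · exact le_max_of_le_left (Real.rpow_le_rpow_of_nonpos ha hx.1 hr.le)

section SingularIntegrand

variable {βt : ℝ}

lemma integral_rpow_neg_of_lt_one (hβt : βt < 1) {x : ℝ} :
    ∫ s in (0 : ℝ)..x, s ^ (-βt) = x ^ (1 - βt) / (1 - βt) := by
  rw [integral_rpow (Or.inl (by linarith)), Real.zero_rpow (by linarith), sub_zero, neg_add_eq_sub]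

lemma intervalIntegrable_div_rpow {f : ℝ → ℝ} {b M : ℝ} (hβt : βt < 1)
    (hf : AEStronglyMeasurable f) (hb : 0 ≤ b) (hM : ∀ s ∈ Ioc 0 b, |f s| ≤ M) :
    IntervalIntegrable (fun s => f s / s ^ βt) volume 0 b := by
  rw [intervalIntegrable_iff_integrableOn_Ioc_of_le hb]
  have hprod : IntegrableOn (fun s => f s * s ^ (-βt)) (Ioc 0 b) :=
    ((intervalIntegrable_iff_integrableOn_Ioc_of_le hb).1
      (intervalIntegrable_rpow' (by linarith))).bdd_mul hf.restrict
      ((ae_restrict_iff' measurableSet_Ioc).2 (Filter.Eventually.of_forall hM))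
  refine hprod.congr_fun (fun s hs => ?_) measurableSet_Ioc
  simp only [Real.rpow_neg hs.1.le, div_eq_mul_inv]

lemma integral_div_rpow_le {f : ℝ → ℝ} {a b S : ℝ} (hβt : βt < 1) (ha : 0 ≤ a) (hab : a ≤ b)
    (hf : IntervalIntegrable (fun s => f s / s ^ βt) volume a b) (hS : ∀ s ∈ Ioo a b, f s ≤ S) :
    ∫ s in a..b, f s / s ^ βt ≤ S * ∫ s in a..b, s ^ (-βt) := by
  rw [← intervalIntegral.integral_const_mul]
  refine integral_mono_on_of_le_Ioo hab hf ((intervalIntegrable_rpow' (by linarith)).const_mul S)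
    fun s hs => ?_
  have hs0 : 0 < s := ha.trans_lt hs.1
  rw [Real.rpow_neg hs0.le, div_eq_mul_inv]
  exact mul_le_mul_of_nonneg_right (hS s hs) (by positivity)

end SingularIntegrand

section VolterraInequality

variable {f : ℝ → ℝ} {βt β η δ T : ℝ}

lemma exists_pos_forall_mul_rpow_mul_integral_le_half (hβt : βt < 1) (hβ : βt - 1 < β)
    (hδ : 0 < δ) :
    ∃ h₁ > 0, ∀ t ∈ Icc 0 h₁, δ * t ^ β * ∫ s in (0 : ℝ)..t, s ^ (-βt) ≤ 1 / 2 := by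
  have hp : 0 < β + (1 - βt) := by linarith
  have hq : 0 < 1 - βt := by linarith
  refine ⟨((1 - βt) / (2 * δ)) ^ (β + (1 - βt))⁻¹, by positivity, fun t ht => ?_⟩
  have hpow : t ^ (β + (1 - βt)) ≤ (1 - βt) / (2 * δ) :=
    (Real.le_rpow_inv_iff_of_pos ht.1 (by positivity) hp).1 ht.2
  calc δ * t ^ β * ∫ s in (0 : ℝ)..t, s ^ (-βt)
      = δ * t ^ (β + (1 - βt)) / (1 - βt) := by
        rw [integral_rpow_neg_of_lt_one hβt, Real.rpow_add' ht.1 hp.ne']; ring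
    _ ≤ δ * ((1 - βt) / (2 * δ)) / (1 - βt) := by gcongr
    _ = 1 / 2 := by field_simp

lemma exists_volterra_window_bounds (hβt : βt < 1) (hδ : 0 < δ) (hT : 0 ≤ T) {h₁ : ℝ}
    (hh₁ : 0 < h₁) :
    ∃ K ≥ 0, ∃ h > 0,
      (∀ a t, h₁ ≤ a → a ≤ t → t ≤ T → δ * t ^ β * ∫ s in (0 : ℝ)..a, s ^ (-βt) ≤ K) ∧
      (∀ a t, h₁ ≤ a → a ≤ t → t ≤ T → t ≤ a + h →
        δ * t ^ β * ∫ s in a..t, s ^ (-βt) ≤ 1 / 2) := by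
  set B := max (h₁ ^ β) (T ^ β)
  set c := max (h₁ ^ (-βt)) (T ^ (-βt))
  have hB : 0 < B := lt_max_of_lt_left (by positivity)
  have hc : 0 < c := lt_max_of_lt_left (by positivity)
  refine ⟨δ * B * ∫ s in (0 : ℝ)..T, s ^ (-βt),
    by positivity [integral_nonneg (μ := volume) hT fun s hs => Real.rpow_nonneg hs.1 (-βt)],
    1 / (2 * (δ * B * c)), by positivity, fun a t ha hat htT => ?_, fun a t ha hat htT hth => ?_⟩
  · have htB : t ^ β ≤ B := rpow_le_max_of_mem_Icc β hh₁ ⟨ha.trans hat, htT⟩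
    have hmono : ∫ s in (0 : ℝ)..a, s ^ (-βt) ≤ ∫ s in (0 : ℝ)..T, s ^ (-βt) :=
      integral_mono_interval le_rfl (hh₁.le.trans ha) (hat.trans htT)
        ((ae_restrict_iff' measurableSet_Ioc).2 (Filter.Eventually.of_forall
          fun s hs => Real.rpow_nonneg hs.1.le _))
        (intervalIntegrable_rpow' (by linarith))
    have hI : 0 ≤ ∫ s in (0 : ℝ)..a, s ^ (-βt) :=
      integral_nonneg (hh₁.le.trans ha) fun s hs => Real.rpow_nonneg hs.1 _
    gcongr
  · have htB : t ^ β ≤ B := rpow_le_max_of_mem_Icc β hh₁ ⟨ha.trans hat, htT⟩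
    have hI : ∫ s in a..t, s ^ (-βt) ≤ c * (t - a) := by
      have := integral_mono_on hat (intervalIntegrable_rpow' (by linarith)) intervalIntegrable_const
        fun s hs => rpow_le_max_of_mem_Icc (-βt) hh₁ ⟨ha.trans hs.1, hs.2.trans htT⟩
      rwa [intervalIntegral.integral_const, smul_eq_mul, mul_comm] at this
    have hI0 : 0 ≤ ∫ s in a..t, s ^ (-βt) :=
      integral_nonneg hat fun s hs => Real.rpow_nonneg (hh₁.le.trans (ha.trans hs.1)) _
    calc δ * t ^ β * ∫ s in a..t, s ^ (-βt) ≤ δ * B * (c * (1 / (2 * (δ * B * c)))) := by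
          gcongr
          exact hI.trans (mul_le_mul_of_nonneg_left (by linarith) hc.le)
      _ = 1 / 2 := by field_simp

variable (hβt : βt < 1) (hη : 0 ≤ η) (hδ : 0 ≤ δ)
  (hint : ∀ b ∈ Icc 0 T, IntervalIntegrable (fun s => f s / s ^ βt) volume 0 b)
  (hbdd : BddAbove (f '' Icc 0 T)) (hf0 : ∀ t ∈ Icc 0 T, 0 ≤ f t)
  (hf : ∀ t ∈ Icc 0 T, f t ≤ η + δ * t ^ β * ∫ s in (0 : ℝ)..t, f s / s ^ βt)
include hβt hη hδ hint hbdd hf0 hf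

lemma le_of_volterra_step {a u A K : ℝ} (ha : 0 ≤ a) (hA : 0 ≤ A) (hK : 0 ≤ K)
    (hfA : ∀ t ∈ Icc 0 T, t < a → f t ≤ A)
    (hpast : ∀ t ∈ Icc 0 T, a ≤ t → t ≤ u → δ * t ^ β * ∫ s in (0 : ℝ)..a, s ^ (-βt) ≤ K)
    (hnew : ∀ t ∈ Icc 0 T, a ≤ t → t ≤ u → δ * t ^ β * ∫ s in a..t, s ^ (-βt) ≤ 1 / 2) :
    ∀ t ∈ Icc 0 T, t ≤ u → f t ≤ 2 * (A + η + K * A) := by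
  refine fun t ht htu => le_two_mul_of_forall_le_add_half (s := Icc 0 T ∩ Iic u)
    (hbdd.mono (image_mono inter_subset_left)) (fun S hS t ⟨ht, htu⟩ => ?_) t ⟨ht, htu⟩
  have hS0 : 0 ≤ S := (hf0 t ht).trans (hS t ⟨ht, htu⟩)
  rcases lt_or_ge t a with hta | hat
  · nlinarith [hfA t ht hta]
  have haT : a ∈ Icc 0 T := ⟨ha, hat.trans ht.2⟩
  have hpast_int := integral_div_rpow_le hβt le_rfl ha (hint a haT)
    fun s hs => hfA s ⟨hs.1.le, hs.2.le.trans haT.2⟩ hs.2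
  have hnew_int := integral_div_rpow_le hβt ha hat ((hint a haT).symm.trans (hint t ht))
    fun s hs => hS s ⟨⟨ha.trans hs.1.le, hs.2.le.trans ht.2⟩, hs.2.le.trans htu⟩
  have hδt : 0 ≤ δ * t ^ β := mul_nonneg hδ (Real.rpow_nonneg ht.1 _)
  calc f t ≤ η + δ * t ^ β * ((∫ s in (0 : ℝ)..a, f s / s ^ βt) + ∫ s in a..t, f s / s ^ βt) := by
        rw [integral_add_adjacent_intervals (hint a haT) ((hint a haT).symm.trans (hint t ht))]
        exact hf t ht
    _ ≤ η + δ * t ^ β * (A * (∫ s in (0 : ℝ)..a, s ^ (-βt)) + S * ∫ s in a..t, s ^ (-βt)) := by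
        gcongr
    _ = η + A * (δ * t ^ β * ∫ s in (0 : ℝ)..a, s ^ (-βt)) +
          S * (δ * t ^ β * ∫ s in a..t, s ^ (-βt)) := by ring
    _ ≤ η + A * K + S * (1 / 2) := by
        gcongr
        exacts [hpast t ht hat htu, hnew t ht hat htu]
    _ ≤ A + η + K * A + S / 2 := by linarith

lemma le_of_volterra_grid {h₁ h K : ℝ} (hh₁ : 0 ≤ h₁) (hh : 0 ≤ h) (hK : 0 ≤ K)
    (hsmall : ∀ t ∈ Icc 0 h₁, δ * t ^ β * ∫ s in (0 : ℝ)..t, s ^ (-βt) ≤ 1 / 2)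
    (hpast : ∀ a t, h₁ ≤ a → a ≤ t → t ≤ T → δ * t ^ β * ∫ s in (0 : ℝ)..a, s ^ (-βt) ≤ K)
    (hnew : ∀ a t, h₁ ≤ a → a ≤ t → t ≤ T → t ≤ a + h →
      δ * t ^ β * ∫ s in a..t, s ^ (-βt) ≤ 1 / 2) (n : ℕ) :
    ∀ t ∈ Icc 0 T, t ≤ h₁ + n * h → f t ≤ 2 * η * (3 + 2 * K) ^ n := by
  induction n with
  | zero =>
    -- the first window is `[0, h₁]`, with nothing before it
    have := le_of_volterra_step hβt hη hδ hint hbdd hf0 hf le_rfl le_rfl hK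
      (fun t ht hta => absurd ht.1 hta.not_ge) (fun t _ _ _ => by simpa using hK)
      (fun t ht _ htu => hsmall t ⟨ht.1, htu⟩)
    simpa using this
  | succ n ih =>
    intro t ht htu
    have hC : 2 * η ≤ 2 * η * (3 + 2 * K) ^ n :=
      le_mul_of_one_le_right (by positivity) (one_le_pow₀ (by linarith))
    have := le_of_volterra_step hβt hη hδ hint hbdd hf0 hf (a := h₁ + n * h) (by positivity)
      (by positivity) hK (fun t ht hta => ih t ht hta.le)
      (fun t ht hat _ => hpast _ t (by nlinarith) hat ht.2)
      (fun t ht hat htu => hnew _ t (by nlinarith) hat ht.2 htu) t ht (by push_cast at htu; linarith)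
    rw [pow_succ]
    nlinarith

end VolterraInequality

theorem gronwall_volterra_one_singularity (βt β η δ T : ℝ)
    (h1 : βt < 1) (h2 : β > βt - 1) (hη : 0 < η) (hδ : 0 < δ) (hT : 0 < T) :
    ∃ C : ℝ, ∀ f : ℝ → ℝ, Measurable f →
      (∀ t ∈ Set.Icc (0 : ℝ) T, 0 ≤ f t) →
      (∃ M : ℝ, ∀ t ∈ Set.Icc (0 : ℝ) T, f t ≤ M) →
      (∀ t ∈ Set.Icc (0 : ℝ) T, f t ≤ η + δ * t ^ β * ∫ s in (0 : ℝ)..t, f s / s ^ βt) →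
      ∀ t ∈ Set.Icc (0 : ℝ) T, f t ≤ C := by
  obtain ⟨h₁, hh₁, hsmall⟩ := exists_pos_forall_mul_rpow_mul_integral_le_half h1 h2 hδ
  obtain ⟨K, hK, h, hh, hpast, hnew⟩ := exists_volterra_window_bounds (β := β) h1 hδ hT.le hh₁
  obtain ⟨N, hN⟩ : ∃ N : ℕ, T ≤ h₁ + N * h := by
    obtain ⟨N, hN⟩ := exists_nat_ge (T / h)
    exact ⟨N, by rw [div_le_iff₀ hh] at hN; linarith⟩
  refine ⟨2 * η * (3 + 2 * K) ^ N, fun f hfm hf0 ⟨M, hfM⟩ hf t ht => ?_⟩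
  have hint : ∀ b ∈ Icc 0 T, IntervalIntegrable (fun s => f s / s ^ βt) volume 0 b :=
    fun b hb => intervalIntegrable_div_rpow (M := M) h1 hfm.aestronglyMeasurable hb.1
      fun s hs => by
        have hsT : s ∈ Icc 0 T := ⟨hs.1.le, hs.2.trans hb.2⟩
        rw [abs_of_nonneg (hf0 s hsT)]; exact hfM s hsT
  exact le_of_volterra_grid h1 hη.le hδ.le hint ⟨M, forall_mem_image.2 hfM⟩ hf0 hf hh₁.le hh.le
    hK hsmall hpast hnew N t ht (ht.2.trans hN)
end

section
/- Gronwall–Volterra lemma with two singularities: let β̃, β̂ < 1, β̌ > β̃ + β̂ − 1 and a, b, T > 0. There exists a finite constant C depending only on β̃, β̂, β̌, a, b, T such that any measurable bounded function f : [0,T] → R_+ satisfying f(t) ≤ a + b t^{β̌} ∫_0^t f(s) s^{-β̃} (t − s)^{-β̂} ds for all t ∈ [0,T] obeys sup_{t∈[0,T]} f(t) ≤ C. -/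
/-!
Write `S u` for the supremum of `f` on `[0, u]`. Split the memory integral at time `t` into the
window `[t - δ, t]` and the older part `[0, t - δ]`. Since `βh < 1` and
`βc + 1 - βt - βh > 0`, the weight `b t ^ βc s ^ (-βt) (t - s) ^ (-βh)` has total mass at most some
`A` on `[0, t]` and mass at most `1/2` on the window, uniformly in `t ∈ (0, T]`, once `δ` is small.
Hence `S u ≤ a + A S (u - δ) + S u / 2`, i.e. `S u ≤ 2a + 2A S (u - δ)`, and `⌊T/δ⌋ + 1` iterations
of this delayed inequality bound `S T` by a constant independent of `f`.
-/

open MeasureTheory Set Filter Topology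

lemma rpow_le_rpow_add_rpow_of_mem_Icc {u v y : ℝ} (r : ℝ) (hu : 0 < u) (hy : y ∈ Icc u v) :
    y ^ r ≤ u ^ r + v ^ r := by
  rcases le_total 0 r with hr | hr
  · linarith [Real.rpow_le_rpow (hu.le.trans hy.1) hy.2 hr, Real.rpow_nonneg hu.le r]
  · linarith [Real.rpow_le_rpow_of_nonpos hu hy.1 hr,
      Real.rpow_nonneg ((hu.le.trans hy.1).trans hy.2) r]

lemma rpow_le_two_rpow_abs_mul_rpow {x y : ℝ} (r : ℝ) (hx : 0 < x) (hy : y ∈ Icc (x / 2) x) :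
    y ^ r ≤ 2 ^ |r| * x ^ r := by
  rcases le_total 0 r with hr | hr
  · calc y ^ r ≤ 1 * x ^ r := by
          rw [one_mul]; exact Real.rpow_le_rpow (by linarith [hy.1]) hy.2 hr
      _ ≤ 2 ^ |r| * x ^ r := by gcongr; exact Real.one_le_rpow one_le_two (abs_nonneg r)
  · calc y ^ r ≤ (x / 2) ^ r := Real.rpow_le_rpow_of_nonpos (by positivity) hy.1 hr
      _ = 2 ^ |r| * x ^ r := by
        rw [abs_of_nonpos hr, Real.div_rpow hx.le zero_le_two, Real.rpow_neg zero_le_two,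
          div_eq_mul_inv, mul_comm]

-- `∫ s in 0..x, betaKernel p q x s = x ^ (p + q + 1) * B(p + 1, q + 1)`, whence the name.
noncomputable def betaKernel (p q x s : ℝ) : ℝ := s ^ p * (x - s) ^ q

noncomputable def betaKernelBound (p q : ℝ) : ℝ := 2 ^ |q| / (p + 1) + 2 ^ |p| / (q + 1)

section BetaKernel

variable {p q x : ℝ}

lemma betaKernelBound_nonneg (hp : -1 < p) (hq : -1 < q) : 0 ≤ betaKernelBound p q :=
  add_nonneg (div_nonneg (by positivity) (by linarith)) (div_nonneg (by positivity) (by linarith))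

lemma betaKernel_nonneg {s : ℝ} (hs : s ∈ Icc 0 x) : 0 ≤ betaKernel p q x s :=
  mul_nonneg (Real.rpow_nonneg hs.1 p) (Real.rpow_nonneg (sub_nonneg.2 hs.2) q)

lemma betaKernel_le (hx : 0 < x) {s : ℝ} (hs : s ∈ Icc 0 x) :
    betaKernel p q x s ≤ 2 ^ |q| * x ^ q * s ^ p + 2 ^ |p| * x ^ p * (x - s) ^ q := by
  have hs0 := Real.rpow_nonneg hs.1 p
  have hxs0 := Real.rpow_nonneg (sub_nonneg.2 hs.2) q
  rcases le_total s (x / 2) with hsx | hsx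
  · have := rpow_le_two_rpow_abs_mul_rpow q hx (y := x - s) ⟨by linarith, by linarith [hs.1]⟩
    have : 0 ≤ 2 ^ |p| * x ^ p * (x - s) ^ q := by positivity
    unfold betaKernel; nlinarith
  · have := rpow_le_two_rpow_abs_mul_rpow p hx ⟨hsx, hs.2⟩
    have : 0 ≤ 2 ^ |q| * x ^ q * s ^ p := by positivity
    unfold betaKernel; nlinarith

lemma intervalIntegrable_rpow_sub (hq : -1 < q) (x a b : ℝ) :
    IntervalIntegrable (fun s => (x - s) ^ q) volume a b := by
  simpa using
    (intervalIntegral.intervalIntegrable_rpow' hq (a := x - a) (b := x - b)).comp_sub_left x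

lemma integral_rpow_sub (hq : -1 < q) (x y : ℝ) :
    ∫ s in (x - y)..x, (x - s) ^ q = y ^ (q + 1) / (q + 1) := by
  rw [intervalIntegral.integral_comp_sub_left (fun s => s ^ q), sub_self, sub_sub_cancel,
    integral_rpow (Or.inl hq), Real.zero_rpow (by linarith), sub_zero]

lemma intervalIntegrable_betaKernel (hp : -1 < p) (hq : -1 < q) (hx : 0 < x) :
    IntervalIntegrable (betaKernel p q x) volume 0 x := by
  refine IntervalIntegrable.mono_fun'
    (((intervalIntegral.intervalIntegrable_rpow' hp).const_mul (2 ^ |q| * x ^ q)).add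
      ((intervalIntegrable_rpow_sub hq x 0 x).const_mul (2 ^ |p| * x ^ p)))
    (by unfold betaKernel; fun_prop) ?_
  rw [uIoc_of_le hx.le]
  refine ae_restrict_of_forall_mem measurableSet_Ioc fun s hs => ?_
  dsimp only
  rw [Real.norm_of_nonneg (betaKernel_nonneg (Ioc_subset_Icc_self hs))]
  exact betaKernel_le hx (Ioc_subset_Icc_self hs)

lemma integral_betaKernel_le (hp : -1 < p) (hq : -1 < q) (hx : 0 < x) :
    ∫ s in 0..x, betaKernel p q x s ≤ betaKernelBound p q * x ^ (p + q + 1) := by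
  have hpow := intervalIntegral.intervalIntegrable_rpow' hp (a := 0) (b := x)
  have hsub := intervalIntegrable_rpow_sub hq x 0 x
  calc ∫ s in 0..x, betaKernel p q x s
      ≤ ∫ s in 0..x, (2 ^ |q| * x ^ q * s ^ p + 2 ^ |p| * x ^ p * (x - s) ^ q) :=
        intervalIntegral.integral_mono_on hx.le (intervalIntegrable_betaKernel hp hq hx)
          ((hpow.const_mul _).add (hsub.const_mul _)) fun s hs => betaKernel_le hx hs
    _ = 2 ^ |q| * x ^ q * (x ^ (p + 1) / (p + 1)) + 2 ^ |p| * x ^ p * (x ^ (q + 1) / (q + 1)) := by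
        rw [intervalIntegral.integral_add (hpow.const_mul _) (hsub.const_mul _),
          intervalIntegral.integral_const_mul, intervalIntegral.integral_const_mul,
          integral_rpow (Or.inl hp), Real.zero_rpow (by linarith), sub_zero,
          ← integral_rpow_sub hq x x, sub_self]
    _ = betaKernelBound p q * x ^ (p + q + 1) := by
        have h1 : x ^ q * x ^ (p + 1) = x ^ (p + q + 1) := by
          rw [← Real.rpow_add hx]; ring_nf
        have h2 : x ^ p * x ^ (q + 1) = x ^ (p + q + 1) := by
          rw [← Real.rpow_add hx]; ring_nf
        rw [betaKernelBound]
        linear_combination (2 ^ |q| / (p + 1)) * h1 + (2 ^ |p| / (q + 1)) * h2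

lemma integral_sub_betaKernel_le (hp : -1 < p) (hq : -1 < q) {δ : ℝ} (hδ : 0 < δ)
    (hδx : 2 * δ ≤ x) :
    ∫ s in (x - δ)..x, betaKernel p q x s ≤ 2 ^ |p| * x ^ p * (δ ^ (q + 1) / (q + 1)) := by
  have hx : 0 < x := by linarith
  calc ∫ s in (x - δ)..x, betaKernel p q x s
      ≤ ∫ s in (x - δ)..x, 2 ^ |p| * x ^ p * (x - s) ^ q := by
        refine intervalIntegral.integral_mono_on (by linarith)
          ((intervalIntegrable_betaKernel hp hq hx).mono_set ?_)
          ((intervalIntegrable_rpow_sub hq x _ _).const_mul _) fun s hs => ?_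
        · rw [uIcc_of_le (by linarith), uIcc_of_le hx.le]
          exact Icc_subset_Icc (by linarith) le_rfl
        · exact mul_le_mul_of_nonneg_right
            (rpow_le_two_rpow_abs_mul_rpow p hx ⟨by linarith [hs.1], hs.2⟩)
            (Real.rpow_nonneg (sub_nonneg.2 hs.2) q)
    _ = 2 ^ |p| * x ^ p * (δ ^ (q + 1) / (q + 1)) := by
        rw [intervalIntegral.integral_const_mul, integral_rpow_sub hq x δ]

lemma rpow_mul_integral_betaKernel_le (hp : -1 < p) (hq : -1 < q) (r : ℝ) (hx : 0 < x) :
    x ^ r * ∫ s in 0..x, betaKernel p q x s ≤ betaKernelBound p q * x ^ (r + p + q + 1) := by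
  calc x ^ r * ∫ s in 0..x, betaKernel p q x s
      ≤ x ^ r * (betaKernelBound p q * x ^ (p + q + 1)) := by
        gcongr; exact integral_betaKernel_le hp hq hx
    _ = betaKernelBound p q * x ^ (r + p + q + 1) := by
        rw [mul_left_comm, ← Real.rpow_add hx]; ring_nf

lemma exists_pos_forall_rpow_mul_integral_betaKernel_tail_le (hp : -1 < p) (hq : -1 < q)
    {r : ℝ} (hγ : 0 < r + p + q + 1) (T : ℝ) {ε : ℝ} (hε : 0 < ε) :
    ∃ δ > 0, ∀ x ∈ Ioc 0 T, x ^ r * ∫ s in max (x - δ) 0..x, betaKernel p q x s ≤ ε := by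
  set γ := r + p + q + 1
  set c := betaKernelBound p q
  set φ : ℝ → ℝ := fun δ =>
    c * (2 * δ) ^ γ + 2 ^ |p| / (q + 1) * (δ ^ γ + T ^ (r + p) * δ ^ (q + 1))
  have hφ : Tendsto φ (𝓝[>] 0) (𝓝 0) := by
    have hcont : ContinuousAt φ 0 := by
      have hq1 : 0 ≤ q + 1 := by linarith
      simp only [φ]
      fun_prop (disch := first | exact Or.inr hγ.le | exact Or.inr hq1)
    simpa [φ, Real.zero_rpow hγ.ne', Real.zero_rpow (show q + 1 ≠ 0 by linarith)]
      using hcont.tendsto.mono_left nhdsWithin_le_nhds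
  obtain ⟨δ, hδε, hδ⟩ := ((hφ.eventually (gt_mem_nhds hε)).and self_mem_nhdsWithin).exists
  refine ⟨δ, hδ, fun x hx => le_trans ?_ hδε.le⟩
  have hc : 0 ≤ c := betaKernelBound_nonneg hp hq
  have hd : 0 ≤ 2 ^ |p| / (q + 1) := div_nonneg (by positivity) (by linarith)
  -- A short window `x ≤ 2δ` is controlled by `x ^ γ`; otherwise the window lies in `[x/2, x]`.
  rcases le_or_gt x (2 * δ) with hxδ | hxδ
  · calc x ^ r * ∫ s in max (x - δ) 0..x, betaKernel p q x s
        ≤ x ^ r * ∫ s in 0..x, betaKernel p q x s := by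
          refine mul_le_mul_of_nonneg_left ?_ (Real.rpow_nonneg hx.1.le r)
          exact intervalIntegral.integral_mono_interval (le_max_right _ _)
            (max_le (by linarith) hx.1.le) le_rfl (ae_restrict_of_forall_mem measurableSet_Ioc
              fun s hs => betaKernel_nonneg (Ioc_subset_Icc_self hs))
            (intervalIntegrable_betaKernel hp hq hx.1)
      _ ≤ c * x ^ γ := rpow_mul_integral_betaKernel_le hp hq r hx.1
      _ ≤ c * (2 * δ) ^ γ := mul_le_mul_of_nonneg_left (Real.rpow_le_rpow hx.1.le hxδ hγ.le) hc
      _ ≤ φ δ := by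
          have hT : 0 < T := hx.1.trans_le hx.2
          exact le_add_of_nonneg_right (mul_nonneg hd (by positivity))
  · rw [max_eq_left (by linarith)]
    calc x ^ r * ∫ s in (x - δ)..x, betaKernel p q x s
        ≤ x ^ r * (2 ^ |p| * x ^ p * (δ ^ (q + 1) / (q + 1))) := by
          exact mul_le_mul_of_nonneg_left (integral_sub_betaKernel_le hp hq hδ hxδ.le)
            (Real.rpow_nonneg hx.1.le r)
      _ = 2 ^ |p| / (q + 1) * (x ^ (r + p) * δ ^ (q + 1)) := by
          rw [Real.rpow_add hx.1]; ring
      _ ≤ 2 ^ |p| / (q + 1) * ((δ ^ (r + p) + T ^ (r + p)) * δ ^ (q + 1)) := by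
          gcongr; exact rpow_le_rpow_add_rpow_of_mem_Icc _ hδ ⟨by linarith, hx.2⟩
      _ = 2 ^ |p| / (q + 1) * (δ ^ γ + T ^ (r + p) * δ ^ (q + 1)) := by
          rw [add_mul, ← Real.rpow_add hδ, show r + p + (q + 1) = γ by ring]
      _ ≤ φ δ := le_add_of_nonneg_left (by positivity)

end BetaKernel

-- Also at `s = 0` and `s = x`, where both sides use `0⁻¹ = 0`.
lemma betaKernel_neg_mul_eq_div {α β x s : ℝ} (hs : s ∈ Icc 0 x) (y : ℝ) :
    betaKernel (-α) (-β) x s * y = y / (s ^ α * (x - s) ^ β) := by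
  rw [betaKernel, Real.rpow_neg hs.1, Real.rpow_neg (sub_nonneg.2 hs.2), ← mul_inv, mul_comm,
    div_eq_mul_inv]

lemma IntervalIntegrable.mul_of_abs_le {k g : ℝ → ℝ} {c d B : ℝ}
    (hk : IntervalIntegrable k volume c d) (hg : AEStronglyMeasurable g volume)
    (hgB : ∀ s ∈ uIoc c d, |g s| ≤ B) : IntervalIntegrable (fun s => k s * g s) volume c d := by
  rw [intervalIntegrable_iff] at hk ⊢
  exact hk.mul_bdd hg.restrict (ae_restrict_of_forall_mem measurableSet_uIoc hgB)

lemma integral_mul_le_mul_integral {k g : ℝ → ℝ} {c d B : ℝ} (hcd : c ≤ d)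
    (hk : IntervalIntegrable k volume c d) (hk0 : ∀ s ∈ Ioc c d, 0 ≤ k s)
    (hkg : IntervalIntegrable (fun s => k s * g s) volume c d) (hgB : ∀ s ∈ Ioc c d, g s ≤ B) :
    ∫ s in c..d, k s * g s ≤ B * ∫ s in c..d, k s := by
  rw [← intervalIntegral.integral_const_mul, intervalIntegral.integral_of_le hcd,
    intervalIntegral.integral_of_le hcd]
  refine setIntegral_mono_on hkg.1 (hk.const_mul B).1 measurableSet_Ioc fun s hs => ?_
  rw [mul_comm B]
  exact mul_le_mul_of_nonneg_left (hgB s hs) (hk0 s hs)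

lemma le_mul_one_add_pow_of_le_add_mul_sub {S : ℝ → ℝ} {p q δ T : ℝ} (hp : 0 ≤ p) (hq : 0 ≤ q)
    (hδ : 0 ≤ δ) (hneg : ∀ u < 0, S u ≤ 0) (hrec : ∀ u ∈ Icc 0 T, S u ≤ p + q * S (u - δ))
    (n : ℕ) :
    ∀ u ≤ T, u < n * δ → S u ≤ p * (1 + q) ^ n := by
  induction n with
  | zero =>
    intro u _ hu
    simp only [CharP.cast_eq_zero, zero_mul] at hu
    simpa using (hneg u hu).trans hp
  | succ n ih =>
    intro u huT hu
    rcases lt_or_ge u 0 with hu0 | hu0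
    · exact (hneg u hu0).trans (by positivity)
    have hpow : 1 ≤ (1 + q) ^ n := one_le_pow₀ (by linarith)
    calc S u ≤ p + q * S (u - δ) := hrec u ⟨hu0, huT⟩
      _ ≤ p + q * (p * (1 + q) ^ n) := by
          gcongr; exact ih _ (by linarith) (by push_cast at hu; linarith)
      _ ≤ p * (1 + q) ^ n + q * (p * (1 + q) ^ n) := by gcongr; exact le_mul_of_one_le_right hp hpow
      _ = p * (1 + q) ^ (n + 1) := by ring

structure VolterraKernelBounds (k : ℝ → ℝ → ℝ) (T A δ : ℝ) : Prop where
  nonneg : ∀ x ∈ Ioc 0 T, ∀ s ∈ Ioc 0 x, 0 ≤ k x s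
  intervalIntegrable : ∀ x ∈ Ioc 0 T, IntervalIntegrable (k x) volume 0 x
  integral_le : ∀ x ∈ Ioc 0 T, ∫ s in 0..x, k x s ≤ A
  integral_window_le : ∀ x ∈ Ioc 0 T, ∫ s in max (x - δ) 0..x, k x s ≤ 1 / 2

section Volterra

variable {k : ℝ → ℝ → ℝ} {f : ℝ → ℝ} {a A δ T u : ℝ}

lemma le_sSup_image_Icc (hfT : BddAbove (f '' Icc 0 T)) (huT : u ≤ T) {s : ℝ}
    (hs : s ∈ Icc 0 u) : f s ≤ sSup (f '' Icc 0 u) :=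
  le_csSup (hfT.mono (image_mono (Icc_subset_Icc_right huT))) (mem_image_of_mem f hs)

lemma sSup_image_Icc_nonneg (hf0 : ∀ x ∈ Icc 0 T, 0 ≤ f x) (huT : u ≤ T) :
    0 ≤ sSup (f '' Icc 0 u) :=
  Real.sSup_nonneg (forall_mem_image.2 fun _ hs => hf0 _ (Icc_subset_Icc_right huT hs))

lemma sSup_image_Icc_mono (hf0 : ∀ x ∈ Icc 0 T, 0 ≤ f x) (hfT : BddAbove (f '' Icc 0 T))
    (huT : u ≤ T) {v : ℝ} (hvu : v ≤ u) : sSup (f '' Icc 0 v) ≤ sSup (f '' Icc 0 u) :=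
  Real.sSup_le (forall_mem_image.2 fun _ hs => le_sSup_image_Icc hfT huT ⟨hs.1, hs.2.trans hvu⟩)
    (sSup_image_Icc_nonneg hf0 huT)

lemma le_add_mul_sSup_add_sSup_div_two (hA : 0 ≤ A) (hδ : 0 ≤ δ)
    (hk : VolterraKernelBounds k T A δ) (hf : AEStronglyMeasurable f volume)
    (hf0 : ∀ x ∈ Icc 0 T, 0 ≤ f x) (hfT : BddAbove (f '' Icc 0 T))
    (hfk : ∀ x ∈ Icc 0 T, f x ≤ a + ∫ s in 0..x, k x s * f s)
    {x : ℝ} (hx : x ∈ Icc 0 T) :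
    f x ≤ a + A * sSup (f '' Icc 0 (x - δ)) + sSup (f '' Icc 0 x) / 2 := by
  have hSδ := sSup_image_Icc_nonneg hf0 (show x - δ ≤ T by linarith [hx.2])
  have hS := sSup_image_Icc_nonneg hf0 hx.2
  rcases hx.1.eq_or_lt with rfl | hx0
  · have := hfk 0 hx
    rw [intervalIntegral.integral_same, add_zero] at this
    linarith [mul_nonneg hA hSδ]
  have hxT : x ∈ Ioc 0 T := ⟨hx0, hx.2⟩
  set m := max (x - δ) 0
  have hm : m ∈ Icc 0 x := ⟨le_max_right _ _, max_le (by linarith) hx0.le⟩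
  have h0m : uIcc 0 m ⊆ uIcc 0 x := uIcc_subset_uIcc_left (by rwa [uIcc_of_le hx0.le])
  have hmx : uIcc m x ⊆ uIcc 0 x := uIcc_subset_uIcc_right (by rwa [uIcc_of_le hx0.le])
  obtain ⟨M, hM⟩ := hfT
  have hkf : IntervalIntegrable (fun s => k x s * f s) volume 0 x := by
    refine (hk.intervalIntegrable x hxT).mul_of_abs_le hf (B := M) fun s hs => ?_
    rw [uIoc_of_le hx0.le] at hs
    have hsT : s ∈ Icc 0 T := ⟨hs.1.le, hs.2.trans hx.2⟩
    rw [abs_of_nonneg (hf0 s hsT)]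
    exact hM (mem_image_of_mem f hsT)
  have hhead : ∫ s in 0..m, k x s * f s ≤ A * sSup (f '' Icc 0 (x - δ)) := calc
    _ ≤ sSup (f '' Icc 0 (x - δ)) * ∫ s in 0..m, k x s :=
        integral_mul_le_mul_integral hm.1 ((hk.intervalIntegrable x hxT).mono_set h0m)
          (fun s hs => hk.nonneg x hxT s ⟨hs.1, hs.2.trans hm.2⟩) (hkf.mono_set h0m)
          fun s hs => le_sSup_image_Icc ⟨M, hM⟩ (by linarith [hx.2])
            ⟨hs.1.le, (le_max_iff.1 hs.2).resolve_right (not_le.2 hs.1)⟩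
    _ ≤ sSup (f '' Icc 0 (x - δ)) * A := by
        refine mul_le_mul_of_nonneg_left ((intervalIntegral.integral_mono_interval le_rfl hm.1
          hm.2 ?_ (hk.intervalIntegrable x hxT)).trans (hk.integral_le x hxT)) hSδ
        exact ae_restrict_of_forall_mem measurableSet_Ioc (hk.nonneg x hxT)
    _ = A * sSup (f '' Icc 0 (x - δ)) := mul_comm _ _
  have hrecent : ∫ s in m..x, k x s * f s ≤ sSup (f '' Icc 0 x) / 2 := calc
    _ ≤ sSup (f '' Icc 0 x) * ∫ s in m..x, k x s :=
        integral_mul_le_mul_integral hm.2 ((hk.intervalIntegrable x hxT).mono_set hmx)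
          (fun s hs => hk.nonneg x hxT s ⟨hm.1.trans_lt hs.1, hs.2⟩) (hkf.mono_set hmx)
          fun s hs => le_sSup_image_Icc ⟨M, hM⟩ hx.2 ⟨(hm.1.trans_lt hs.1).le, hs.2⟩
    _ ≤ sSup (f '' Icc 0 x) * (1 / 2) := mul_le_mul_of_nonneg_left (hk.integral_window_le x hxT) hS
    _ = sSup (f '' Icc 0 x) / 2 := by ring
  have := hfk x hx
  rw [← intervalIntegral.integral_add_adjacent_intervals (hkf.mono_set h0m)
    (hkf.mono_set hmx)] at this
  linarith

lemma sSup_image_Icc_le_two_mul_add (ha : 0 ≤ a) (hA : 0 ≤ A) (hδ : 0 ≤ δ)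
    (hk : VolterraKernelBounds k T A δ) (hf : AEStronglyMeasurable f volume)
    (hf0 : ∀ x ∈ Icc 0 T, 0 ≤ f x) (hfT : BddAbove (f '' Icc 0 T))
    (hfk : ∀ x ∈ Icc 0 T, f x ≤ a + ∫ s in 0..x, k x s * f s)
    (hu : u ∈ Icc 0 T) :
    sSup (f '' Icc 0 u) ≤ 2 * a + 2 * A * sSup (f '' Icc 0 (u - δ)) := by
  have hSδ := sSup_image_Icc_nonneg hf0 (show u - δ ≤ T by linarith [hu.2])
  have hS := sSup_image_Icc_nonneg hf0 hu.2
  suffices sSup (f '' Icc 0 u) ≤ a + A * sSup (f '' Icc 0 (u - δ)) + sSup (f '' Icc 0 u) / 2 by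
    linarith
  refine Real.sSup_le (forall_mem_image.2 fun x hx => ?_) (by positivity)
  have hxT : x ∈ Icc 0 T := ⟨hx.1, hx.2.trans hu.2⟩
  refine (le_add_mul_sSup_add_sSup_div_two hA hδ hk hf hf0 hfT hfk hxT).trans ?_
  have hmono_δ :=
    sSup_image_Icc_mono hf0 hfT (by linarith [hu.2]) (by linarith [hx.2] : x - δ ≤ u - δ)
  have hmono := sSup_image_Icc_mono hf0 hfT hu.2 hx.2
  linarith [mul_le_mul_of_nonneg_left hmono_δ hA]

theorem le_two_mul_one_add_pow_of_le_add_integral_mul (ha : 0 ≤ a) (hA : 0 ≤ A) (hδ : 0 < δ)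
    (hk : VolterraKernelBounds k T A δ) (hf : AEStronglyMeasurable f volume)
    (hf0 : ∀ x ∈ Icc 0 T, 0 ≤ f x) (hfT : BddAbove (f '' Icc 0 T))
    (hfk : ∀ x ∈ Icc 0 T, f x ≤ a + ∫ s in 0..x, k x s * f s)
    {x : ℝ} (hx : x ∈ Icc 0 T) :
    f x ≤ 2 * a * (1 + 2 * A) ^ (⌊T / δ⌋₊ + 1) := by
  refine (le_sSup_image_Icc hfT le_rfl hx).trans ?_
  refine le_mul_one_add_pow_of_le_add_mul_sub (S := fun u => sSup (f '' Icc 0 u))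
    (by positivity) (by positivity) hδ.le
    -- `sSup ∅ = 0` in `ℝ`
    (fun u hu => by simp [Icc_eq_empty_of_lt hu])
    (fun u hu => sSup_image_Icc_le_two_mul_add ha hA hδ.le hk hf hf0 hfT hfk hu)
    _ T le_rfl ?_
  rw [← div_lt_iff₀ hδ]
  exact_mod_cast Nat.lt_floor_add_one (T / δ)

end Volterra

lemma volterraKernelBounds_mul_betaKernel {p q r b T δ : ℝ} (hp : -1 < p) (hq : -1 < q)
    (hγ : 0 ≤ r + p + q + 1) (hb : 0 < b)
    (hδ : ∀ x ∈ Ioc 0 T, x ^ r * ∫ s in max (x - δ) 0..x, betaKernel p q x s ≤ 1 / (2 * b)) :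
    VolterraKernelBounds (fun x s => b * x ^ r * betaKernel p q x s) T
      (b * (betaKernelBound p q * T ^ (r + p + q + 1))) δ := by
  refine ⟨fun x hx s hs => ?_, fun x hx => ?_, fun x hx => ?_, fun x hx => ?_⟩
  · exact mul_nonneg (mul_nonneg hb.le (Real.rpow_nonneg hx.1.le _))
      (betaKernel_nonneg (Ioc_subset_Icc_self hs))
  · exact (intervalIntegrable_betaKernel hp hq hx.1).const_mul _
  · rw [intervalIntegral.integral_const_mul, mul_assoc]
    refine mul_le_mul_of_nonneg_left ?_ hb.le
    exact (rpow_mul_integral_betaKernel_le hp hq r hx.1).trans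
      (mul_le_mul_of_nonneg_left (Real.rpow_le_rpow hx.1.le hx.2 hγ)
        (betaKernelBound_nonneg hp hq))
  · rw [intervalIntegral.integral_const_mul, mul_assoc]
    calc b * (x ^ r * ∫ s in max (x - δ) 0..x, betaKernel p q x s)
        ≤ b * (1 / (2 * b)) := mul_le_mul_of_nonneg_left (hδ x hx) hb.le
      _ = 1 / 2 := by field_simp

theorem gronwall_volterra_two_singularities (βt βh βc a b T : ℝ)
    (h1 : βt < 1) (h2 : βh < 1) (h3 : βc > βt + βh - 1)
    (ha : 0 < a) (hb : 0 < b) (hT : 0 < T) :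
    ∃ C : ℝ, ∀ f : ℝ → ℝ, Measurable f →
      (∀ t ∈ Set.Icc (0 : ℝ) T, 0 ≤ f t) →
      (∃ M : ℝ, ∀ t ∈ Set.Icc (0 : ℝ) T, f t ≤ M) →
      (∀ t ∈ Set.Icc (0 : ℝ) T,
        f t ≤ a + b * t ^ βc * ∫ s in (0 : ℝ)..t, f s / (s ^ βt * (t - s) ^ βh)) →
      ∀ t ∈ Set.Icc (0 : ℝ) T, f t ≤ C := by
  have hp : -1 < -βt := by linarith
  have hq : -1 < -βh := by linarith
  have hγ : 0 < βc + -βt + -βh + 1 := by linarith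
  obtain ⟨δ, hδ, hδk⟩ := exists_pos_forall_rpow_mul_integral_betaKernel_tail_le hp hq hγ T
    (show 0 < 1 / (2 * b) by positivity)
  set A := b * (betaKernelBound (-βt) (-βh) * T ^ (βc + -βt + -βh + 1))
  have hA0 : 0 ≤ A :=
    mul_nonneg hb.le (mul_nonneg (betaKernelBound_nonneg hp hq) (Real.rpow_nonneg hT.le _))
  have hk := volterraKernelBounds_mul_betaKernel hp hq hγ.le hb hδk
  refine ⟨2 * a * (1 + 2 * A) ^ (⌊T / δ⌋₊ + 1), fun f hf hf0 ⟨M, hM⟩ hfk t ht => ?_⟩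
  refine le_two_mul_one_add_pow_of_le_add_integral_mul ha.le hA0 hδ hk hf.aestronglyMeasurable
    hf0 ⟨M, forall_mem_image.2 hM⟩ (fun x hx => (hfk x hx).trans_eq ?_) ht
  rw [← intervalIntegral.integral_const_mul]
  refine congrArg (a + ·) (intervalIntegral.integral_congr fun s hs => ?_)
  rw [uIcc_of_le hx.1] at hs
  simp only [mul_assoc (b * x ^ βc), betaKernel_neg_mul_eq_div hs]
end

section
/- Quantitative short-time two-singularity Gronwall bound: under the hypotheses f(t) ≤ a + b t^{β̌} ∫_0^t f(s) s^{-β̃} (t−s)^{-β̂} ds with β̃, β̂ < 1, β̌ > β̃ + β̂ − 1 and a, b > 0, for every t with t < (b B(1 − β̃, 1 − β̂))^{-1/(β̌ + 1 − β̃ − β̂)} one has sup_{s∈[0,t]} f(s) ≤ a / (1 − b B(1 − β̃, 1 − β̂) t^{β̌ + 1 − β̃ − β̂}). -/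
/-!
The substitution `u = s x` gives
`∫₀ˢ u^(-βt) (s-u)^(-βh) du = s^(1-βt-βh) B(1-βt, 1-βh)`, so a bound `f ≤ X` on `[0,t]`
improves to `f ≤ a + c X` there, with `c = b B t^(βc+1-βt-βh)`; the smallness of `t` is
exactly `c < 1`. Taking for `X` the (finite) supremum of `f` on `[0,t]` gives
`sup f ≤ a + c sup f`.
-/

open MeasureTheory

/-- The Beta function `B(x,y) = ∫_0^1 u^(x-1) (1-u)^(y-1) du`. -/
noncomputable def betaFn (x y : ℝ) : ℝ :=
  ∫ u in (0 : ℝ)..1, u ^ (x - 1) * (1 - u) ^ (y - 1)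

open Set Real intervalIntegral

lemma intervalIntegrable_rpow_mul_sub_rpow {p q s : ℝ} (hp : -1 < p) (hq : -1 < q) (hs : 0 < s) :
    IntervalIntegrable (fun u : ℝ => u ^ p * (s - u) ^ q) volume 0 s := by
  have hmid : 0 ≤ s / 2 := by linarith
  refine IntervalIntegrable.trans (b := s / 2) ?_ ?_
  · refine (intervalIntegrable_rpow' hp).mul_continuousOn ?_
    rw [uIcc_of_le hmid]
    exact ContinuousOn.rpow_const (by fun_prop) fun u hu => Or.inl (by linarith [hu.2])
  · have hsing : IntervalIntegrable (fun u : ℝ => (s - u) ^ q) volume (s / 2) s := by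
      simpa [show s - s / 2 = s / 2 by ring] using
        ((intervalIntegrable_rpow' hq (a := 0) (b := s / 2)).comp_sub_left s).symm
    refine hsing.continuousOn_mul ?_
    rw [uIcc_of_le (by linarith)]
    exact ContinuousOn.rpow_const (by fun_prop) fun u hu => Or.inl (by linarith [hu.1])

lemma betaFn_pos {x y : ℝ} (hx : 0 < x) (hy : 0 < y) : 0 < betaFn x y := by
  have hint := intervalIntegrable_rpow_mul_sub_rpow (p := x - 1) (q := y - 1) (by linarith)
    (by linarith) one_pos
  refine intervalIntegral_pos_of_pos_on hint (fun u hu => ?_) one_pos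
  exact mul_pos (rpow_pos_of_pos hu.1 _) (rpow_pos_of_pos (by linarith [hu.2]) _)

lemma integral_rpow_mul_sub_rpow {p q s : ℝ} (hs : 0 < s) :
    ∫ u in (0 : ℝ)..s, u ^ p * (s - u) ^ q = s ^ (p + q + 1) * betaFn (p + 1) (q + 1) := by
  have hscale : ∀ x ∈ uIcc (0 : ℝ) 1,
      (s * x) ^ p * (s - s * x) ^ q = s ^ (p + q) * (x ^ p * (1 - x) ^ q) := by
    intro x hx
    rw [uIcc_of_le zero_le_one] at hx
    rw [show s - s * x = s * (1 - x) by ring, mul_rpow hs.le hx.1,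
      mul_rpow hs.le (by linarith [hx.2]), rpow_add hs]
    ring
  have hsubst := integral_comp_mul_left (a := 0) (b := 1)
    (fun u : ℝ => u ^ p * (s - u) ^ q) hs.ne'
  rw [integral_congr hscale, intervalIntegral.integral_const_mul, mul_zero, mul_one] at hsubst
  simp only [betaFn, add_sub_cancel_right]
  rw [rpow_add hs, rpow_one, mul_comm _ s, mul_assoc, hsubst, smul_eq_mul, ← mul_assoc,
    mul_inv_cancel₀ hs.ne', one_mul]

lemma integral_div_rpow_mul_sub_rpow_le {p q s X : ℝ} {f : ℝ → ℝ} (hp : p < 1) (hq : q < 1)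
    (hs : 0 ≤ s) (hf0 : ∀ u ∈ Icc 0 s, 0 ≤ f u) (hfX : ∀ u ∈ Icc 0 s, f u ≤ X) :
    ∫ u in (0 : ℝ)..s, f u / (u ^ p * (s - u) ^ q) ≤
      X * (s ^ (1 - p - q) * betaFn (1 - p) (1 - q)) := by
  have hX : 0 ≤ X := (hf0 0 ⟨le_rfl, hs⟩).trans (hfX 0 ⟨le_rfl, hs⟩)
  have hB := betaFn_pos (sub_pos.2 hp) (sub_pos.2 hq)
  rcases hs.eq_or_lt with rfl | hs
  · rw [integral_same]; positivity
  have hker := intervalIntegrable_rpow_mul_sub_rpow (p := -p) (q := -q) (by linarith)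
    (by linarith) hs
  have hpt : ∀ u ∈ Ioc 0 s,
      f u / (u ^ p * (s - u) ^ q) ≤ X * (u ^ (-p) * (s - u) ^ (-q)) := by
    intro u hu
    have hsu : 0 ≤ s - u := sub_nonneg.2 hu.2
    rw [rpow_neg hu.1.le, rpow_neg hsu, ← mul_inv, ← div_eq_mul_inv]
    exact div_le_div_of_nonneg_right (hfX u (Ioc_subset_Icc_self hu))
      (mul_nonneg (rpow_nonneg hu.1.le _) (rpow_nonneg hsu _))
  calc ∫ u in (0 : ℝ)..s, f u / (u ^ p * (s - u) ^ q)
      ≤ ∫ u in (0 : ℝ)..s, X * (u ^ (-p) * (s - u) ^ (-q)) := by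
        rw [integral_of_le hs.le, integral_of_le hs.le]
        -- no integrability of `f` is needed: a non-integrable integrand has integral `0`
        refine integral_mono_of_nonneg ?_ (hker.const_mul X).1 ?_
        · filter_upwards [ae_restrict_mem measurableSet_Ioc] with u hu
          exact div_nonneg (hf0 u (Ioc_subset_Icc_self hu))
            (mul_nonneg (rpow_nonneg hu.1.le _) (rpow_nonneg (sub_nonneg.2 hu.2) _))
        · filter_upwards [ae_restrict_mem measurableSet_Ioc] with u hu
          exact hpt u hu
    _ = X * (s ^ (1 - p - q) * betaFn (1 - p) (1 - q)) := by
        rw [intervalIntegral.integral_const_mul, integral_rpow_mul_sub_rpow hs]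
        congr 2 <;> ring_nf

lemma le_div_one_sub_of_le_add_mul {α : Type*} {S : Set α} {f : α → ℝ} {a c : ℝ}
    (hc : c < 1) (hbdd : BddAbove (f '' S))
    (hstep : ∀ X, (∀ x ∈ S, f x ≤ X) → ∀ x ∈ S, f x ≤ a + c * X) :
    ∀ x ∈ S, f x ≤ a / (1 - c) := by
  intro x hx
  set X := sSup (f '' S)
  have hfX : ∀ y ∈ S, f y ≤ X := fun y hy => le_csSup hbdd (mem_image_of_mem f hy)
  have hX : X ≤ a + c * X :=
    csSup_le ⟨f x, mem_image_of_mem f hx⟩ (forall_mem_image.2 (hstep X hfX))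
  rw [le_div_iff₀ (by linarith)]
  nlinarith [hfX x hx]

lemma mul_rpow_lt_one_of_lt_rpow {c t γ : ℝ} (hc : 0 < c) (hγ : 0 < γ) (ht : 0 ≤ t)
    (h : t < c ^ (-1 / γ)) : c * t ^ γ < 1 := by
  have := rpow_lt_rpow ht h hγ
  rw [← rpow_mul hc.le, div_mul_cancel₀ _ hγ.ne', rpow_neg_one] at this
  calc c * t ^ γ < c * c⁻¹ := mul_lt_mul_of_pos_left this hc
    _ = 1 := mul_inv_cancel₀ hc.ne'

lemma le_add_mul_of_le_of_le_add_integral {βt βh βc a b t X : ℝ} {f : ℝ → ℝ} (h1 : βt < 1)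
    (h2 : βh < 1) (hγ : 0 < βc + 1 - βt - βh) (hb : 0 ≤ b) (hf0 : ∀ s ∈ Icc 0 t, 0 ≤ f s)
    (hint : ∀ s ∈ Icc 0 t,
      f s ≤ a + b * s ^ βc * ∫ u in (0 : ℝ)..s, f u / (u ^ βt * (s - u) ^ βh))
    (hfX : ∀ s ∈ Icc 0 t, f s ≤ X) :
    ∀ s ∈ Icc 0 t, f s ≤ a + b * betaFn (1 - βt) (1 - βh) * t ^ (βc + 1 - βt - βh) * X := by
  intro s hs
  have hsub : Icc 0 s ⊆ Icc 0 t := Icc_subset_Icc_right hs.2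
  have hX : 0 ≤ X := (hf0 s hs).trans (hfX s hs)
  have hB := (betaFn_pos (sub_pos.2 h1) (sub_pos.2 h2)).le
  have hs0 := hs.1
  calc f s ≤ a + b * s ^ βc * ∫ u in (0 : ℝ)..s, f u / (u ^ βt * (s - u) ^ βh) := hint s hs
    _ ≤ a + b * s ^ βc * (X * (s ^ (1 - βt - βh) * betaFn (1 - βt) (1 - βh))) := by
        gcongr
        exact integral_div_rpow_mul_sub_rpow_le h1 h2 hs0 (fun u hu => hf0 u (hsub hu))
          (fun u hu => hfX u (hsub hu))
    _ = a + b * betaFn (1 - βt) (1 - βh) * s ^ (βc + 1 - βt - βh) * X := by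
        rw [show βc + 1 - βt - βh = βc + (1 - βt - βh) by ring, rpow_add' hs0 (by linarith)]
        ring
    _ ≤ a + b * betaFn (1 - βt) (1 - βh) * t ^ (βc + 1 - βt - βh) * X := by
        gcongr
        exact hs.2

theorem gronwall_two_singularities_short_time_general (βt βh βc a b T : ℝ)
    (h1 : βt < 1) (h2 : βh < 1) (h3 : βc > βt + βh - 1)
    (hb : 0 < b)
    (f : ℝ → ℝ)
    (hf0 : ∀ t ∈ Set.Icc (0 : ℝ) T, 0 ≤ f t)
    (hfb : ∃ M : ℝ, ∀ t ∈ Set.Icc (0 : ℝ) T, f t ≤ M)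
    (hint : ∀ t ∈ Set.Icc (0 : ℝ) T,
      f t ≤ a + b * t ^ βc * ∫ s in (0 : ℝ)..t, f s / (s ^ βt * (t - s) ^ βh))
    (t : ℝ) (ht : t ∈ Set.Icc (0 : ℝ) T)
    (htsmall : t < (b * betaFn (1 - βt) (1 - βh)) ^ (-(1 : ℝ) / (βc + 1 - βt - βh))) :
    ∀ s ∈ Set.Icc (0 : ℝ) t,
      f s ≤ a / (1 - b * betaFn (1 - βt) (1 - βh) * t ^ (βc + 1 - βt - βh)) := by
  obtain ⟨ht0, htT⟩ := ht
  obtain ⟨M, hM⟩ := hfb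
  have hsub : Icc 0 t ⊆ Icc 0 T := Icc_subset_Icc_right htT
  have hγ : 0 < βc + 1 - βt - βh := by linarith
  have hbB : 0 < b * betaFn (1 - βt) (1 - βh) :=
    mul_pos hb (betaFn_pos (sub_pos.2 h1) (sub_pos.2 h2))
  refine le_div_one_sub_of_le_add_mul (mul_rpow_lt_one_of_lt_rpow hbB hγ ht0 htsmall)
    ⟨M, forall_mem_image.2 fun s hs => hM s (hsub hs)⟩ fun X hX => ?_
  exact le_add_mul_of_le_of_le_add_integral h1 h2 hγ hb.le (fun s hs => hf0 s (hsub hs))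
    (fun s hs => hint s (hsub hs)) hX

theorem gronwall_two_singularities_short_time (βt βh βc a b T : ℝ)
    (h1 : βt < 1) (h2 : βh < 1) (h3 : βc > βt + βh - 1)
    (ha : 0 < a) (hb : 0 < b) (hT : 0 < T)
    (f : ℝ → ℝ) (hfm : Measurable f)
    (hf0 : ∀ t ∈ Set.Icc (0 : ℝ) T, 0 ≤ f t)
    (hfb : ∃ M : ℝ, ∀ t ∈ Set.Icc (0 : ℝ) T, f t ≤ M)
    (hint : ∀ t ∈ Set.Icc (0 : ℝ) T,
      f t ≤ a + b * t ^ βc * ∫ s in (0 : ℝ)..t, f s / (s ^ βt * (t - s) ^ βh))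
    (t : ℝ) (ht : t ∈ Set.Icc (0 : ℝ) T)
    (htsmall : t < (b * betaFn (1 - βt) (1 - βh)) ^ (-(1 : ℝ) / (βc + 1 - βt - βh))) :
    ∀ s ∈ Set.Icc (0 : ℝ) t,
      f s ≤ a / (1 - b * betaFn (1 - βt) (1 - βh) * t ^ (βc + 1 - βt - βh)) :=
  gronwall_two_singularities_short_time_general βt βh βc a b T h1 h2 h3 hb f hf0 hfb hint t ht
    htsmall
end

section
/- One-step Euler transition density bound: let b_h : [0,T] × R^d → R^d be measurable with ‖b_h‖_∞ ≤ B h^{-(1/q + d/(2ρ))} where d/ρ + 2/q < 1 and set α = 1 − d/ρ − 2/q. Fix c > 1, h > 0, t_k = kh, x ∈ R^d and t ∈ (t_k, t_k + h]. Then the function Γ^h(t_k, x, t, y) := (1/h) ∫_0^h g_1(t − t_k, y − x − (t − t_k) b_h(t_k + s, x)) ds satisfies Γ^h(t_k, x, t, y) ≤ c^{d/2} e^{B² h^α /(2(c−1))} g_c(t − t_k, y − x) for all y ∈ R^d. -/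
/-!
Pointwise in `s`, the integrand is a Gaussian of variance `u = t - t_k` evaluated at `z - v`,
with `z = y - x` and drift shift `v = u b_h(t_k + s, x)`. Young's inequality
`‖z‖² ≤ c ‖z - v‖² + c/(c-1) ‖v‖²` trades the shift for an inflation of the variance by `c`,
at the cost of the factor `c^{d/2}` (normalising constants) and `exp(‖v‖² / (2(c-1)u))`.
Since `‖v‖²/u ≤ u ‖b_h‖_∞² ≤ h B² h^{-2/q - d/ρ} = B² h^α`, this bound is uniform in `s`,
and so it bounds the average over `s ∈ [0, h]` as well.
-/

open MeasureTheory
open scoped Real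

lemma norm_sq_le_mul_norm_sub_sq_add {E : Type*} [SeminormedAddCommGroup E] {c : ℝ} (hc : 1 < c)
    (z v : E) : ‖z‖ ^ 2 ≤ c * ‖z - v‖ ^ 2 + c / (c - 1) * ‖v‖ ^ 2 := by
  have hc1 : 0 < c - 1 := by linarith
  have htri : ‖z‖ ≤ ‖z - v‖ + ‖v‖ := norm_le_norm_sub_add z v
  have hsq : ‖z‖ ^ 2 ≤ (‖z - v‖ + ‖v‖) ^ 2 := pow_le_pow_left₀ (norm_nonneg z) htri 2
  have hgap : (‖z - v‖ + ‖v‖) ^ 2 ≤ c * ‖z - v‖ ^ 2 + c / (c - 1) * ‖v‖ ^ 2 := by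
    rw [div_mul_eq_mul_div, ← sub_nonneg]
    have : c * ‖z - v‖ ^ 2 + c * ‖v‖ ^ 2 / (c - 1) - (‖z - v‖ + ‖v‖) ^ 2 =
        ((c - 1) * ‖z - v‖ - ‖v‖) ^ 2 / (c - 1) := by
      field_simp
      ring
    rw [this]
    positivity
  exact hsq.trans hgap

lemma gauss_nonneg (d : ℕ) {c u : ℝ} (hc : 0 < c) (hu : 0 < u) (z : EuclideanSpace ℝ (Fin d)) :
    0 ≤ gauss d c u z := by
  unfold gauss
  positivity

lemma gauss_sub_le {d : ℕ} {c u : ℝ} (hc : 1 < c) (hu : 0 < u) (z v : EuclideanSpace ℝ (Fin d)) :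
    gauss d 1 u (z - v) ≤
      c ^ ((d : ℝ) / 2) * Real.exp (‖v‖ ^ 2 / (2 * (c - 1) * u)) * gauss d c u z := by
  have hc0 : 0 < c := by linarith
  have hprefactor : (2 * π * 1 * u) ^ (-(d : ℝ) / 2) =
      c ^ ((d : ℝ) / 2) * (2 * π * c * u) ^ (-(d : ℝ) / 2) := by
    rw [show 2 * π * c * u = c * (2 * π * 1 * u) by ring, Real.mul_rpow hc0.le (by positivity),
      ← mul_assoc, ← Real.rpow_add hc0, show (d : ℝ) / 2 + -(d : ℝ) / 2 = 0 by ring,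
      Real.rpow_zero, one_mul]
  have hexponent : -‖z - v‖ ^ 2 / (2 * 1 * u) ≤
      ‖v‖ ^ 2 / (2 * (c - 1) * u) + -‖z‖ ^ 2 / (2 * c * u) := by
    have hyoung := norm_sq_le_mul_norm_sub_sq_add hc z v
    have hrhs : ‖v‖ ^ 2 / (2 * (c - 1) * u) + -‖z‖ ^ 2 / (2 * c * u) =
        (c / (c - 1) * ‖v‖ ^ 2 - ‖z‖ ^ 2) / (2 * c * u) := by
      field_simp
      ring
    rw [hrhs, div_le_div_iff₀ (by positivity) (by positivity)]
    nlinarith [mul_le_mul_of_nonneg_left hyoung (by positivity : (0 : ℝ) ≤ 2 * u)]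
  unfold gauss
  calc (2 * π * 1 * u) ^ (-(d : ℝ) / 2) * Real.exp (-‖z - v‖ ^ 2 / (2 * 1 * u))
      ≤ (2 * π * 1 * u) ^ (-(d : ℝ) / 2) *
          Real.exp (‖v‖ ^ 2 / (2 * (c - 1) * u) + -‖z‖ ^ 2 / (2 * c * u)) := by gcongr
    _ = _ := by rw [hprefactor, Real.exp_add]; ring

lemma norm_smul_sq_div_le {E : Type*} [SeminormedAddCommGroup E] [NormedSpace ℝ E]
    {u h M : ℝ} (hu : 0 < u) (huh : u ≤ h) {b : E} (hb : ‖b‖ ≤ M) :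
    ‖u • b‖ ^ 2 / u ≤ h * M ^ 2 := by
  rw [norm_smul, Real.norm_of_nonneg hu.le, mul_pow, sq u, mul_assoc, mul_div_cancel_left₀ _ hu.ne']
  exact mul_le_mul huh (pow_le_pow_left₀ (norm_nonneg b) hb 2) (by positivity) (hu.le.trans huh)

lemma gauss_sub_smul_le {d : ℕ} {c u h M : ℝ} (hc : 1 < c) (hu : 0 < u) (huh : u ≤ h)
    (z : EuclideanSpace ℝ (Fin d)) {b : EuclideanSpace ℝ (Fin d)} (hb : ‖b‖ ≤ M) :
    gauss d 1 u (z - u • b) ≤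
      c ^ ((d : ℝ) / 2) * Real.exp (h * M ^ 2 / (2 * (c - 1))) * gauss d c u z := by
  have hdrift : ‖u • b‖ ^ 2 / (2 * (c - 1) * u) ≤ h * M ^ 2 / (2 * (c - 1)) :=
    calc ‖u • b‖ ^ 2 / (2 * (c - 1) * u) = ‖u • b‖ ^ 2 / u / (2 * (c - 1)) := by
          rw [div_div, mul_comm u]
      _ ≤ h * M ^ 2 / (2 * (c - 1)) := by gcongr; exact norm_smul_sq_div_le hu huh hb
  refine (gauss_sub_le hc hu z (u • b)).trans ?_
  gcongr
  exact gauss_nonneg d (by linarith) hu z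

lemma inv_mul_intervalIntegral_le_of_norm_le {f : ℝ → ℝ} {h C : ℝ} (hh : 0 < h)
    (hf : ∀ s ∈ Set.Ioc 0 h, ‖f s‖ ≤ C) :
    (1 / h) * ∫ s in (0 : ℝ)..h, f s ≤ C := by
  have hnorm := intervalIntegral.norm_integral_le_of_norm_le_const
    (fun s hs => hf s (by rwa [Set.uIoc_of_le hh.le] at hs))
  rw [sub_zero, abs_of_pos hh] at hnorm
  calc (1 / h) * ∫ s in (0 : ℝ)..h, f s ≤ (1 / h) * (C * h) :=
        mul_le_mul_of_nonneg_left ((le_abs_self _).trans hnorm) (by positivity)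
    _ = C := by field_simp

theorem one_step_euler_density_bound_general (d : ℕ) (q ρ c h B : ℝ)
    (hc : 1 < c) (hh : 0 < h)
    (bh : ℝ → EuclideanSpace ℝ (Fin d) → EuclideanSpace ℝ (Fin d))
    (hbbound : ∀ s z, ‖bh s z‖ ≤ B * h ^ (-(1 / q + (d : ℝ) / (2 * ρ))))
    (k : ℕ) (t : ℝ) (ht1 : (k : ℝ) * h < t) (ht2 : t ≤ (k : ℝ) * h + h)
    (x y : EuclideanSpace ℝ (Fin d)) :
    (1 / h) * ∫ s in (0 : ℝ)..h,
        gauss d 1 (t - (k : ℝ) * h) (y - x - (t - (k : ℝ) * h) • bh ((k : ℝ) * h + s) x) ≤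
      c ^ ((d : ℝ) / 2) *
        Real.exp (B ^ 2 * h ^ (1 - (d : ℝ) / ρ - 2 / q) / (2 * (c - 1))) *
        gauss d c (t - (k : ℝ) * h) (y - x) := by
  set u := t - (k : ℝ) * h
  have hu : 0 < u := by linarith
  have huh : u ≤ h := by linarith
  have hα : h * (B * h ^ (-(1 / q + (d : ℝ) / (2 * ρ)))) ^ 2 =
      B ^ 2 * h ^ (1 - (d : ℝ) / ρ - 2 / q) := by
    have hsplit : h ^ (1 - (d : ℝ) / ρ - 2 / q) =
        h ^ (1 : ℝ) * (h ^ (-(1 / q + (d : ℝ) / (2 * ρ)))) ^ (2 : ℝ) := by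
      rw [← Real.rpow_mul hh.le, ← Real.rpow_add hh]
      ring_nf
    rw [hsplit, Real.rpow_one, Real.rpow_two]
    ring
  refine inv_mul_intervalIntegral_le_of_norm_le hh fun s _ => ?_
  rw [Real.norm_of_nonneg (gauss_nonneg d one_pos hu _), ← hα]
  exact gauss_sub_smul_le hc hu huh (y - x) (hbbound _ x)

theorem one_step_euler_density_bound (d : ℕ) (q ρ c h B : ℝ)
    (hq : 0 < q) (hρ : 0 < ρ) (hcond : (d : ℝ) / ρ + 2 / q < 1)
    (hc : 1 < c) (hh : 0 < h) (hB : 0 < B)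
    (bh : ℝ → EuclideanSpace ℝ (Fin d) → EuclideanSpace ℝ (Fin d))
    (hbmeas : Measurable (Function.uncurry bh))
    (hbbound : ∀ s z, ‖bh s z‖ ≤ B * h ^ (-(1 / q + (d : ℝ) / (2 * ρ))))
    (k : ℕ) (t : ℝ) (ht1 : (k : ℝ) * h < t) (ht2 : t ≤ (k : ℝ) * h + h)
    (x y : EuclideanSpace ℝ (Fin d)) :
    (1 / h) * ∫ s in (0 : ℝ)..h,
        gauss d 1 (t - (k : ℝ) * h) (y - x - (t - (k : ℝ) * h) • bh ((k : ℝ) * h + s) x) ≤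
      c ^ ((d : ℝ) / 2) *
        Real.exp (B ^ 2 * h ^ (1 - (d : ℝ) / ρ - 2 / q) / (2 * (c - 1))) *
        gauss d c (t - (k : ℝ) * h) (y - x) :=
  one_step_euler_density_bound_general d q ρ c h B hc hh bh hbbound k t ht1 ht2 x y
end
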